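/- Under the assumptions of the previous lemma (gradient Lipschitz condition with constant C_n on A, |Y_i| ≤ β_n, C_n·δ_n² ≤ 1, w* ∈ A with |f_{w*}(X_i)| ≤ β_n, A contained in the ball of radius δ_n around w^(0)), it holds for each t that |F_n(w*) − F_{n,lin,w^(t)}(w*)| ≤ 3·β_n·C_n·‖w* − w^(t)‖², where F_{n,lin,w₀}(w) = (1/n)·Σ_i |Y_i − f_{lin,w₀,w}(X_i)|² is the empirical risk of the linear Taylor approximation f_{lin,w₀,w}(x) = f_{w₀}(x) + ⟨∇_w f_{w₀}(x), w − w₀⟩. -/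

import Mathlib

/-!
Lipschitz continuity of the gradient on the convex set `A` gives, at every sample `Xᵢ`, the
quadratic Taylor bound `|f_{w*}(Xᵢ) - f_{lin,wₜ,w*}(Xᵢ)| ≤ C/2 ‖w* - wₜ‖²`. Both points lie within
`δ` of `w₀`, so `C δ² ≤ 1` keeps this remainder below `2β`; hence both residuals are `O(β)`, and
`|a² - b²| = |a + b| |a - b| ≤ 6β · C/2 ‖w* - wₜ‖²` termwise. Averaging preserves the bound.
-/

open scoped RealInnerProductSpace
open Set Finset

theorem Convex.norm_image_sub_sub_fderiv_le {E F : Type*} [NormedAddCommGroup E] [NormedSpace ℝ E]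
    [NormedAddCommGroup F] [NormedSpace ℝ F] {f : E → F} {f' : E → E →L[ℝ] F} {A : Set E}
    (hA : Convex ℝ A) (hf : ∀ w ∈ A, HasFDerivAt f (f' w) w) {C : ℝ}
    (hLip : ∀ w₁ ∈ A, ∀ w₂ ∈ A, ‖f' w₁ - f' w₂‖ ≤ C * ‖w₁ - w₂‖)
    {x y : E} (hx : x ∈ A) (hy : y ∈ A) :
    ‖f y - f x - f' x (y - x)‖ ≤ C / 2 * ‖y - x‖ ^ 2 := by
  set v := y - x
  have hseg : ∀ t ∈ Icc (0 : ℝ) 1, x + t • v ∈ A := fun t ht => by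
    simpa [v, AffineMap.lineMap_apply_module', add_comm] using hA.lineMap_mem hx hy ht
  have hderiv : ∀ t ∈ Icc (0 : ℝ) 1, HasDerivAt (fun t : ℝ => f (x + t • v) - f x - t • f' x v)
      (f' (x + t • v) v - f' x v) t := fun t ht => by
    have hline : HasDerivAt (fun t : ℝ => x + t • v) v t := by
      simpa using ((hasDerivAt_id t).smul_const v).const_add x
    have := (((hf _ (hseg t ht)).comp_hasDerivAt t hline).sub_const (f x)).sub
      ((hasDerivAt_id t).smul_const (f' x v))
    rwa [one_smul] at this
  -- The remainder along the segment has derivative of norm `≤ C ‖v‖² t`; fence it by `C ‖v‖² t² / 2`.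
  have hbound := image_norm_le_of_norm_deriv_right_le_deriv_boundary
    (f' := fun t => f' (x + t • v) v - f' x v) (B := fun t => C / 2 * ‖v‖ ^ 2 * t ^ 2)
    (B' := fun t => C * ‖v‖ ^ 2 * t)
    (fun t ht => (hderiv t ht).continuousAt.continuousWithinAt)
    (fun t ht => (hderiv t (Ico_subset_Icc_self ht)).hasDerivWithinAt)
    (by simp)
    (fun t =>
      ((hasDerivAt_pow 2 t).const_mul (C / 2 * ‖v‖ ^ 2)).congr_deriv (by push_cast; ring))
    (fun t ht => calc
      ‖f' (x + t • v) v - f' x v‖ ≤ ‖f' (x + t • v) - f' x‖ * ‖v‖ :=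
        (f' (x + t • v) - f' x).le_opNorm v
      _ ≤ C * ‖x + t • v - x‖ * ‖v‖ := by
        gcongr; exact hLip _ (hseg t (Ico_subset_Icc_self ht)) _ hx
      _ = C * ‖v‖ ^ 2 * t := by
        rw [add_sub_cancel_left, norm_smul, Real.norm_of_nonneg ht.1]; ring)
    (right_mem_Icc.2 zero_le_one)
  simpa [v] using hbound

theorem Convex.abs_sub_linearization_le {E : Type*} [NormedAddCommGroup E] [InnerProductSpace ℝ E]
    [CompleteSpace E] {f : E → ℝ} {Gf : E → E} {A : Set E} (hA : Convex ℝ A)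
    (hf : ∀ w ∈ A, HasGradientAt f (Gf w) w) {C : ℝ}
    (hLip : ∀ w₁ ∈ A, ∀ w₂ ∈ A, ‖Gf w₁ - Gf w₂‖ ≤ C * ‖w₁ - w₂‖)
    {x y : E} (hx : x ∈ A) (hy : y ∈ A) :
    |f y - (f x + ⟪Gf x, y - x⟫)| ≤ C / 2 * ‖y - x‖ ^ 2 := by
  have key := hA.norm_image_sub_sub_fderiv_le (f' := fun w => InnerProductSpace.toDual ℝ E (Gf w))
    (fun w hw => (hf w hw).hasFDerivAt)
    (fun w₁ h₁ w₂ h₂ => by simpa only [← map_sub, LinearIsometryEquiv.norm_map] using hLip w₁ h₁ w₂ h₂)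
    hx hy
  rwa [InnerProductSpace.toDual_apply_apply, Real.norm_eq_abs, sub_sub] at key

theorem abs_sub_sq_sub_sub_sq_le {y u v β e : ℝ} (hy : |y| ≤ β) (hu : |u| ≤ β)
    (huv : |u - v| ≤ e) (he : e ≤ 2 * β) :
    |(y - u) ^ 2 - (y - v) ^ 2| ≤ 6 * β * e := by
  have hsum : |(y - u) + (y - v)| ≤ 6 * β := calc
    |(y - u) + (y - v)| = |2 * (y - u) + (u - v)| := by ring_nf
    _ ≤ 2 * (|y| + |u|) + |u - v| := by
      grw [abs_add_le, abs_mul, abs_sub]; norm_num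
    _ ≤ 6 * β := by linarith
  calc |(y - u) ^ 2 - (y - v) ^ 2| = |(y - u) + (y - v)| * |u - v| := by
        rw [abs_sub_comm u v, ← abs_mul]; ring_nf
    _ ≤ 6 * β * e := by gcongr; linarith [abs_nonneg y]

theorem Finset.abs_mean_sub_mean_le {ι : Type*} (s : Finset ι) {a b : ι → ℝ} {K : ℝ}
    (hK : 0 ≤ K) (hab : ∀ i ∈ s, |a i - b i| ≤ K) :
    |1 / (#s : ℝ) * ∑ i ∈ s, a i - 1 / (#s : ℝ) * ∑ i ∈ s, b i| ≤ K := by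
  rw [← mul_sub, ← sum_sub_distrib, abs_mul, abs_of_nonneg (by positivity)]
  calc 1 / (#s : ℝ) * |∑ i ∈ s, (a i - b i)| ≤ 1 / (#s : ℝ) * (#s * K) := by
        gcongr; simpa using abs_sum_le_sum_abs _ s |>.trans (sum_le_sum hab)
    _ ≤ K := by
      rcases eq_or_ne (#s : ℝ) 0 with h | h
      · simp [h, hK]
      · rw [one_div, inv_mul_cancel_left₀ h]

theorem empirical_risk_linearization_error_general
    {J d n : ℕ}
    (f : EuclideanSpace ℝ (Fin J) → EuclideanSpace ℝ (Fin d) → ℝ)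
    (Gf : EuclideanSpace ℝ (Fin J) → EuclideanSpace ℝ (Fin d) → EuclideanSpace ℝ (Fin J))
    (hGf : ∀ w x, HasGradientAt (fun v => f v x) (Gf w x) w)
    (X : Fin n → EuclideanSpace ℝ (Fin d)) (Y : Fin n → ℝ)
    (w0 : EuclideanSpace ℝ (Fin J)) (deltan : ℝ)
    (A : Set (EuclideanSpace ℝ (Fin J)))
    (hAsub : A ⊆ {w | ‖w - w0‖ ≤ deltan}) (hAconv : Convex ℝ A)
    (Cn betan : ℝ) (hCn : 0 ≤ Cn) (hbetan : 1 ≤ betan)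
    (hLip : ∀ w₁ ∈ A, ∀ w₂ ∈ A, ∀ i : Fin n,
      ‖Gf w₁ (X i) - Gf w₂ (X i)‖ ≤ Cn * ‖w₁ - w₂‖)
    (hY : ∀ i : Fin n, |Y i| ≤ betan)
    (hCd : Cn * deltan ^ 2 ≤ 1)
    (wstar : EuclideanSpace ℝ (Fin J)) (hwstar : wstar ∈ A)
    (hfwstar : ∀ i : Fin n, |f wstar (X i)| ≤ betan)
    (wt : EuclideanSpace ℝ (Fin J)) (hwt : wt ∈ A) :
    |(1 / (n : ℝ)) * ∑ i : Fin n, |Y i - f wstar (X i)| ^ 2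
      - (1 / (n : ℝ)) * ∑ i : Fin n,
          |Y i - (f wt (X i) + (inner ℝ (Gf wt (X i)) (wstar - wt) : ℝ))| ^ 2|
      ≤ 3 * betan * Cn * ‖wstar - wt‖ ^ 2 := by
  have hdist : ‖wstar - wt‖ ≤ 2 * deltan := by
    have hstar : ‖wstar - w0‖ ≤ deltan := hAsub hwstar
    have ht : ‖wt - w0‖ ≤ deltan := hAsub hwt
    have := norm_sub_le_norm_sub_add_norm_sub wstar w0 wt
    rw [norm_sub_rev w0] at this
    linarith
  have hremainder : Cn / 2 * ‖wstar - wt‖ ^ 2 ≤ 2 * betan := by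
    have : ‖wstar - wt‖ ^ 2 ≤ (2 * deltan) ^ 2 := by gcongr
    nlinarith
  have hterm : ∀ i ∈ (univ : Finset (Fin n)),
      |(|Y i - f wstar (X i)| ^ 2 - |Y i - (f wt (X i) + ⟪Gf wt (X i), wstar - wt⟫)| ^ 2)|
        ≤ 3 * betan * Cn * ‖wstar - wt‖ ^ 2 := fun i _ => by
    have htaylor := hAconv.abs_sub_linearization_le (fun w _ => hGf w (X i))
      (fun w₁ h₁ w₂ h₂ => hLip w₁ h₁ w₂ h₂ i) hwt hwstar
    rw [sq_abs, sq_abs]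
    linarith [abs_sub_sq_sub_sub_sq_le (hY i) (hfwstar i) htaylor hremainder]
  simpa using univ.abs_mean_sub_mean_le (by positivity) hterm

/-- Bound on the difference between the empirical risk and the empirical risk of the
linear Taylor approximation, at a point `wstar` of the constraint set. -/
theorem empirical_risk_linearization_error
    {J d n : ℕ} (hn : 0 < n)
    (f : EuclideanSpace ℝ (Fin J) → EuclideanSpace ℝ (Fin d) → ℝ)
    (Gf : EuclideanSpace ℝ (Fin J) → EuclideanSpace ℝ (Fin d) → EuclideanSpace ℝ (Fin J))
    (hGf : ∀ w x, HasGradientAt (fun v => f v x) (Gf w x) w)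
    (X : Fin n → EuclideanSpace ℝ (Fin d)) (Y : Fin n → ℝ)
    (w0 : EuclideanSpace ℝ (Fin J)) (deltan : ℝ) (hdelta : 0 ≤ deltan)
    (A : Set (EuclideanSpace ℝ (Fin J)))
    (hAsub : A ⊆ {w | ‖w - w0‖ ≤ deltan}) (hAc : IsClosed A) (hAconv : Convex ℝ A)
    (Cn betan : ℝ) (hCn : 0 ≤ Cn) (hbetan : 1 ≤ betan)
    (hLip : ∀ w₁ ∈ A, ∀ w₂ ∈ A, ∀ i : Fin n,
      ‖Gf w₁ (X i) - Gf w₂ (X i)‖ ≤ Cn * ‖w₁ - w₂‖)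
    (hY : ∀ i : Fin n, |Y i| ≤ betan)
    (hCd : Cn * deltan ^ 2 ≤ 1)
    (wstar : EuclideanSpace ℝ (Fin J)) (hwstar : wstar ∈ A)
    (hfwstar : ∀ i : Fin n, |f wstar (X i)| ≤ betan)
    (wt : EuclideanSpace ℝ (Fin J)) (hwt : wt ∈ A) :
    |(1 / (n : ℝ)) * ∑ i : Fin n, |Y i - f wstar (X i)| ^ 2
      - (1 / (n : ℝ)) * ∑ i : Fin n,
          |Y i - (f wt (X i) + (inner ℝ (Gf wt (X i)) (wstar - wt) : ℝ))| ^ 2|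
      ≤ 3 * betan * Cn * ‖wstar - wt‖ ^ 2 :=
  empirical_risk_linearization_error_general f Gf hGf X Y w0 deltan A hAsub hAconv Cn betan hCn
    hbetan hLip hY hCd wstar hwstar hfwstar wt hwt
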